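/- arXiv:1510.00282 — 4 statements merged into one kernel-verified Lean document; each statement's English description precedes it below -/
import Mathlib

section
/- For an infinite word x over a finite alphabet that is not ultimately periodic, the subword complexity function satisfies p(n+1, x) ≥ p(n, x) + 1 for all n ≥ 1, where p(n, x) is the number of distinct factors of length n occurring in x. -/
/-!
If `p(n + 1) ≤ p(n)`, then deleting the last letter is injective on the factors of length
`n + 1`, so every factor of length `n` has a unique continuation by one letter. Since there
are finitely many factors of length `n`, one of them occurs at two positions `a < b`; by
uniqueness of continuations `x (a + m) = x (b + m)` for all `m`, i.e. `x` is ultimately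
periodic with period `b - a`.
-/

/-- Number of distinct factors of length `n` of the infinite word `x`. -/
noncomputable def complexity {A : Type*} (x : ℕ → A) (n : ℕ) : ℕ :=
  Set.ncard {w : Fin n → A | ∃ j : ℕ, ∀ k : Fin n, w k = x (j + k)}

/-- `x` is ultimately periodic. -/
def UltimatelyPeriodic {A : Type*} (x : ℕ → A) : Prop :=
  ∃ N T : ℕ, 0 < T ∧ ∀ k ≥ N, x (k + T) = x k

section Factors

variable {A : Type*}

def factor (x : ℕ → A) (n j : ℕ) : Fin n → A := fun k => x (j + k)

lemma complexity_eq_ncard_range_factor (x : ℕ → A) (n : ℕ) :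
    complexity x n = (Set.range (factor x n)).ncard := by
  unfold complexity
  congr 1
  ext w
  simp [factor, funext_iff, eq_comm]

lemma image_init_range_factor (x : ℕ → A) (n : ℕ) :
    Fin.init '' Set.range (factor x (n + 1)) = Set.range (factor x n) := by
  rw [← Set.range_comp]
  rfl

lemma injOn_init_range_factor_of_complexity_succ_le [Finite A] {x : ℕ → A} {n : ℕ}
    (h : complexity x (n + 1) ≤ complexity x n) :
    Set.InjOn Fin.init (Set.range (factor x (n + 1))) := by
  have hfin := Set.toFinite (Set.range (factor x (n + 1)))
  refine Set.injOn_of_ncard_image_eq (le_antisymm (Set.ncard_image_le hfin) ?_) hfin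
  rwa [image_init_range_factor, ← complexity_eq_ncard_range_factor,
    ← complexity_eq_ncard_range_factor]

lemma apply_add_eq_of_factor_eq_of_complexity_succ_le [Finite A] {x : ℕ → A} {n : ℕ}
    (h : complexity x (n + 1) ≤ complexity x n) {i j : ℕ}
    (hij : factor x n i = factor x n j) : x (i + n) = x (j + n) :=
  congrFun (injOn_init_range_factor_of_complexity_succ_le h ⟨i, rfl⟩ ⟨j, rfl⟩ hij)
    (Fin.last n)

lemma apply_add_eq_of_factor_eq {x : ℕ → A} {n : ℕ}
    (hdet : ∀ i j, factor x n i = factor x n j → x (i + n) = x (j + n)) {a b : ℕ}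
    (hab : factor x n a = factor x n b) (m : ℕ) : x (a + m) = x (b + m) := by
  induction m using Nat.strong_induction_on with
  | _ m ih =>
    rcases lt_or_ge m n with hm | hm
    · exact congrFun hab ⟨m, hm⟩
    · obtain ⟨l, rfl⟩ := Nat.exists_eq_add_of_le' hm
      have hl : factor x n (a + l) = factor x n (b + l) :=
        funext fun k => by simpa [factor, add_assoc] using ih (l + k) (by omega)
      simpa [add_assoc] using hdet _ _ hl

lemma ultimatelyPeriodic_of_apply_add_eq {x : ℕ → A} {a b : ℕ} (hab : a < b)
    (h : ∀ m, x (a + m) = x (b + m)) : UltimatelyPeriodic x := by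
  refine ⟨a, b - a, by omega, fun k hk => ?_⟩
  have := h (k - a)
  rw [show a + (k - a) = k by omega, show b + (k - a) = k + (b - a) by omega] at this
  exact this.symm

lemma ultimatelyPeriodic_of_complexity_succ_le [Finite A] {x : ℕ → A} {n : ℕ}
    (h : complexity x (n + 1) ≤ complexity x n) : UltimatelyPeriodic x := by
  have hdet : ∀ i j, factor x n i = factor x n j → x (i + n) = x (j + n) := fun _ _ =>
    apply_add_eq_of_factor_eq_of_complexity_succ_le h
  obtain ⟨a, b, hne, hab⟩ := Finite.exists_ne_map_eq_of_infinite (factor x n)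
  rcases hne.lt_or_gt with hlt | hlt
  · exact ultimatelyPeriodic_of_apply_add_eq hlt (apply_add_eq_of_factor_eq hdet hab)
  · exact ultimatelyPeriodic_of_apply_add_eq hlt (apply_add_eq_of_factor_eq hdet hab.symm)

end Factors

theorem stmt0 {A : Type*} [Fintype A] (x : ℕ → A)
    (hx : ¬ UltimatelyPeriodic x) :
    ∀ n : ℕ, 1 ≤ n → complexity x n + 1 ≤ complexity x (n + 1) := by
  intro n _
  by_contra! hlt
  exact hx (ultimatelyPeriodic_of_complexity_succ_le (Nat.le_of_lt_succ hlt))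
end

section
/- If x is an infinite word over a finite alphabet that is not ultimately periodic, then p(n, x) ≥ n + 1 for all n ≥ 1. -/
namespace Word

variable {A : Type*} (x : ℕ → A)

def window (j n : ℕ) : Fin n → A := fun k => x (j + k)

def factors (n : ℕ) : Set (Fin n → A) := Set.range fun j => window x j n

theorem complexity_eq_ncard_factors (n : ℕ) : complexity x n = (factors x n).ncard := by
  unfold complexity factors window
  congr 1
  ext w
  simp [funext_iff, eq_comm]

theorem complexity_zero : complexity x 0 = 1 := by
  rw [complexity_eq_ncard_factors, Set.ncard_eq_one]
  exact ⟨Fin.elim0, Set.eq_singleton_iff_unique_mem.2 ⟨⟨0, Subsingleton.elim _ _⟩,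
    fun _ _ => Subsingleton.elim _ _⟩⟩

theorem image_init_factors (n : ℕ) :
    (fun w : Fin (n + 1) → A => w ∘ Fin.castSucc) '' factors x (n + 1) = factors x n := by
  rw [factors, factors, ← Set.range_comp]
  rfl

variable [Finite A]

theorem window_succ_eq_of_complexity_succ_le {n : ℕ}
    (h : complexity x (n + 1) ≤ complexity x n) {j j' : ℕ}
    (hw : window x j n = window x j' n) : x (j + n) = x (j' + n) := by
  rw [complexity_eq_ncard_factors, complexity_eq_ncard_factors,
    ← image_init_factors x n] at h
  have hinj := Set.injOn_of_ncard_image_eq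
    (le_antisymm (Set.ncard_image_le (Set.toFinite _)) h) (Set.toFinite _)
  have hext : window x j (n + 1) = window x j' (n + 1) :=
    hinj ⟨j, rfl⟩ ⟨j', rfl⟩ hw
  exact congrFun hext (Fin.last n)

theorem shift_eq_of_window_eq {n : ℕ} (h : complexity x (n + 1) ≤ complexity x n)
    {j j' : ℕ} (hw : window x j n = window x j' n) (d : ℕ) : x (j + d) = x (j' + d) := by
  induction d using Nat.strong_induction_on with
  | _ d ih =>
    rcases lt_or_ge d n with hd | hd
    · exact congrFun hw ⟨d, hd⟩
    · have hprev : window x (j + (d - n)) n = window x (j' + (d - n)) n := by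
        funext k
        simpa only [window, add_assoc] using ih (d - n + k) (by omega)
      simpa only [add_assoc, Nat.sub_add_cancel hd] using
        window_succ_eq_of_complexity_succ_le x h hprev

theorem ultimatelyPeriodic_of_complexity_succ_le {n : ℕ}
    (h : complexity x (n + 1) ≤ complexity x n) : UltimatelyPeriodic x := by
  obtain ⟨a, b, hab, hw⟩ := Finite.exists_ne_map_eq_of_infinite fun j => window x j n
  wlog hlt : a < b generalizing a b
  · exact this b a hab.symm hw.symm (by omega)
  refine ⟨a, b - a, by omega, fun k hk => ?_⟩
  have hshift := shift_eq_of_window_eq x h hw (k - a)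
  rwa [Nat.add_sub_cancel' hk, ← Nat.add_sub_assoc hk.le, Nat.add_comm b,
    Nat.add_sub_assoc hlt.le, eq_comm] at hshift

theorem succ_le_complexity (hx : ¬ UltimatelyPeriodic x) (n : ℕ) : n + 1 ≤ complexity x n := by
  induction n with
  | zero => rw [complexity_zero]
  | succ n ih =>
    by_contra hlt
    exact hx (ultimatelyPeriodic_of_complexity_succ_le x (n := n) (by omega))

end Word

theorem stmt1 {A : Type*} [Fintype A] (x : ℕ → A)
    (hx : ¬ UltimatelyPeriodic x) :
    ∀ n : ℕ, 1 ≤ n → n + 1 ≤ complexity x n :=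
  fun n _ => Word.succ_le_complexity x hx n
end

section
/- If x is an infinite word over a finite alphabet which is not ultimately periodic, then there exist arbitrarily large integers n such that r(n, x) ≥ 2n + 1. -/
/-- The set of lengths `m` of prefixes of `x` whose last `n` letters occur
a second time inside the prefix. -/
def returnSet {A : Type*} (x : ℕ → A) (n : ℕ) : Set ℕ :=
  {m : ℕ | ∃ i : ℕ, i + n < m ∧ ∀ k < n, x (i + k) = x (m - n + k)}

/-- `r(n, x)`: the length of the smallest prefix of `x` containing two
(possibly overlapping) occurrences of some word of length `n`. -/
noncomputable def minReturn {A : Type*} (x : ℕ → A) (n : ℕ) : ℕ :=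
  sInf (returnSet x n)

namespace Word

variable {A : Type*} {x : ℕ → A} {a b c d g p q : ℕ}

def HasPeriodOn (x : ℕ → A) (p a b : ℕ) : Prop :=
  ∀ t, a ≤ t → t + p < b → x (t + p) = x t

def factor (x : ℕ → A) (a b : ℕ) : List A :=
  (List.range (b - a)).map fun k => x (a + k)

theorem hasPeriodOn_iff_hasPeriod_factor :
    HasPeriodOn x p a b ↔ (factor x a b).HasPeriod p := by
  rw [List.hasPeriod_iff_getElem?]
  simp only [factor, List.length_map, List.length_range, List.getElem?_map]
  constructor
  · intro h i hi
    rw [List.getElem?_range (by omega), List.getElem?_range (by omega), Option.map_some,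
      Option.map_some, ← add_assoc, h (a + i) (by omega) (by omega)]
  · intro h t hat htb
    have := h (t - a) (by omega)
    rw [List.getElem?_range (by omega), List.getElem?_range (by omega), Option.map_some,
      Option.map_some, Option.some_inj] at this
    rw [show t = a + (t - a) by omega, add_assoc]
    exact this.symm

theorem HasPeriodOn.mono (h : HasPeriodOn x p a b) (hac : a ≤ c) (hdb : d ≤ b) :
    HasPeriodOn x p c d :=
  fun t hct htd => h t (hac.trans hct) (htd.trans_le hdb)

theorem HasPeriodOn.apply_add_mul (h : HasPeriodOn x p a b) {s : ℕ} (has : a ≤ s) :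
    ∀ k, s + k * p < b → x (s + k * p) = x s
  | 0, _ => by rw [zero_mul, add_zero]
  | k + 1, hk => by
    have hk' : s + k * p + p < b := by rwa [add_one_mul, ← add_assoc] at hk
    rw [add_one_mul, ← add_assoc, h _ (by omega) hk', h.apply_add_mul has k (by omega)]

theorem HasPeriodOn.apply_eq_of_modEq (h : HasPeriodOn x p a b) {s t : ℕ}
    (has : a ≤ s) (hsb : s < b) (hat : a ≤ t) (htb : t < b) (hst : s ≡ t [MOD p]) :
    x s = x t := by
  wlog hle : s ≤ t generalizing s t
  · exact (this hat htb has hsb hst.symm (by omega)).symm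
  obtain ⟨k, hk⟩ := (Nat.modEq_iff_dvd' hle).mp hst
  have ht : t = s + k * p := by rw [mul_comm, ← hk]; omega
  subst ht
  exact (h.apply_add_mul has k htb).symm

theorem exists_modEq_mem_Ico (hq : 0 < q) (c t : ℕ) :
    ∃ j, c ≤ j ∧ j < c + q ∧ j ≡ t [MOD q] := by
  have hcq : c ≤ q * c := Nat.le_mul_of_pos_left c hq
  have hmod := Nat.mod_lt (t + q * c - c) hq
  -- the summand `q * c` keeps the subtraction from truncating
  refine ⟨c + (t + q * c - c) % q, by omega, by omega, ?_⟩
  calc c + (t + q * c - c) % q ≡ c + (t + q * c - c) [MOD q] := (Nat.mod_modEq _ _).add_left c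
    _ = t + q * c := by omega
    _ ≡ t [MOD q] := by simp [Nat.ModEq]

theorem HasPeriodOn.of_subinterval_of_dvd (hq : HasPeriodOn x q a b) (hg : HasPeriodOn x g c d)
    (hq0 : 0 < q) (hgq : g ∣ q) (hac : a ≤ c) (hdb : d ≤ b) (hcd : c + q ≤ d) :
    HasPeriodOn x g a b := by
  have hgq' : g ≤ q := Nat.le_of_dvd hq0 hgq
  intro t hat htb
  obtain ⟨j, hcj, hjq, hjt⟩ := exists_modEq_mem_Ico hq0 c t
  have htj : x t = x j := hq.apply_eq_of_modEq hat (by omega) (by omega) (by omega) hjt.symm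
  rw [htj]
  by_cases hjd : j + g < d
  · rw [← hg j hcj hjd]
    exact hq.apply_eq_of_modEq (by omega) htb (by omega) (by omega) (hjt.add_right g).symm
  · -- `j + g - q` lies in `[c, d)`, is congruent to `t + g` modulo `q` and to `j` modulo `g`
    have hj' : j + g - q + q = j + g := by omega
    calc x (t + g) = x (j + g - q) := by
          refine hq.apply_eq_of_modEq (by omega) htb (by omega) (by omega) ?_
          refine Nat.ModEq.add_right_cancel' q ?_
          rw [hj']
          exact Nat.add_modEq_right.trans (hjt.symm.add_right g)
      _ = x j := by
          refine hg.apply_eq_of_modEq (by omega) (by omega) hcj (by omega) ?_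
          refine Nat.ModEq.add_right_cancel' q ?_
          rw [hj']
          exact Nat.add_modEq_right.trans ((Nat.modEq_zero_iff_dvd.mpr hgq).add_left j).symm

theorem HasPeriodOn.gcd (hp : HasPeriodOn x p a b) (hq : HasPeriodOn x q a b)
    (hlen : p + q - p.gcd q ≤ b - a) : HasPeriodOn x (p.gcd q) a b := by
  rw [hasPeriodOn_iff_hasPeriod_factor] at *
  exact hp.gcd hq (by simpa [factor] using hlen)

theorem HasPeriodOn.gcd_of_overlap {a' b' : ℕ} (hp : HasPeriodOn x p a b)
    (hq : HasPeriodOn x q a' b') (hp0 : 0 < p) (hq0 : 0 < q)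
    (hlen : max a a' + p + q ≤ min b b' + 1) : HasPeriodOn x (p.gcd q) a b := by
  have hg0 : 0 < p.gcd q := Nat.gcd_pos_of_pos_left q hp0
  have hinter : HasPeriodOn x (p.gcd q) (max a a') (min b b') :=
    (hp.mono (le_max_left _ _) (min_le_left _ _)).gcd
      (hq.mono (le_max_right _ _) (min_le_right _ _)) (by omega)
  exact hp.of_subinterval_of_dvd hinter hp0 (Nat.gcd_dvd_left p q) (le_max_left _ _)
    (min_le_left _ _) (by omega)

noncomputable def minPeriodOn (x : ℕ → A) (a b : ℕ) : ℕ :=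
  sInf {p | 0 < p ∧ HasPeriodOn x p a b}

theorem minPeriodOn_pos_and_hasPeriodOn (hp : HasPeriodOn x p a b) (hp0 : 0 < p) :
    0 < minPeriodOn x a b ∧ HasPeriodOn x (minPeriodOn x a b) a b :=
  Nat.sInf_mem (s := {p | 0 < p ∧ HasPeriodOn x p a b}) ⟨p, hp0, hp⟩

theorem minPeriodOn_le (hp : HasPeriodOn x p a b) (hp0 : 0 < p) : minPeriodOn x a b ≤ p :=
  Nat.sInf_le ⟨hp0, hp⟩

theorem minPeriodOn_le_of_overlap {a' b' p' : ℕ} (hp : HasPeriodOn x p a b)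
    (hp' : HasPeriodOn x p' a' b') (hp0 : 0 < p) (hp0' : 0 < p')
    (hlen : max a a' + p + p' ≤ min b b' + 1) : minPeriodOn x a b ≤ minPeriodOn x a' b' := by
  obtain ⟨hQ0, hQ⟩ := minPeriodOn_pos_and_hasPeriodOn hp hp0
  obtain ⟨hQ0', hQ'⟩ := minPeriodOn_pos_and_hasPeriodOn hp' hp0'
  have hle := minPeriodOn_le hp hp0
  have hle' := minPeriodOn_le hp' hp0'
  calc minPeriodOn x a b
      ≤ (minPeriodOn x a b).gcd (minPeriodOn x a' b') :=
        minPeriodOn_le (hQ.gcd_of_overlap hQ' hQ0 hQ0' (by omega)) (Nat.gcd_pos_of_pos_left _ hQ0)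
    _ ≤ minPeriodOn x a' b' := Nat.gcd_le_right _ hQ0'

theorem minPeriodOn_eq_of_overlap {a' b' p' : ℕ} (hp : HasPeriodOn x p a b)
    (hp' : HasPeriodOn x p' a' b') (hp0 : 0 < p) (hp0' : 0 < p')
    (hlen : max a a' + p + p' ≤ min b b' + 1) : minPeriodOn x a b = minPeriodOn x a' b' :=
  (minPeriodOn_le_of_overlap hp hp' hp0 hp0' hlen).antisymm
    (minPeriodOn_le_of_overlap hp' hp hp0' hp0 (by rw [max_comm, min_comm]; omega))

end Word

section Windows

open Word

variable {A : Type*} {x : ℕ → A}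

theorem ultimatelyPeriodic_of_periodic_windows {N : ℕ}
    (h : ∀ n ≥ N, ∃ a p, 0 < p ∧ a + p ≤ n ∧ HasPeriodOn x p a (a + n + p)) :
    UltimatelyPeriodic x := by
  choose! a p hp0 hap hper using h
  set Q : ℕ → ℕ := fun n => minPeriodOn x (a n) (a n + n + p n)
  have hstep : ∀ n ≥ N, Q n = Q (n + 1) := fun n hn =>
    minPeriodOn_eq_of_overlap (hper n hn) (hper (n + 1) (by omega)) (hp0 n hn)
      (hp0 (n + 1) (by omega)) (by have := hap n hn; have := hap (n + 1) (by omega); omega)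
  have hconst : ∀ n ≥ N, Q n = Q N := by
    intro n hn
    induction n, hn using Nat.le_induction with
    | base => rfl
    | succ n hn ih => rw [← hstep n hn, ih]
  obtain ⟨hQ0, -⟩ := minPeriodOn_pos_and_hasPeriodOn (hper N le_rfl) (hp0 N le_rfl)
  refine ⟨N, Q N, hQ0, fun k hk => ?_⟩
  have hk1 : k + 1 ≥ N := by omega
  have hQ : HasPeriodOn x (Q (k + 1)) (a (k + 1)) (a (k + 1) + (k + 1) + p (k + 1)) :=
    (minPeriodOn_pos_and_hasPeriodOn (hper (k + 1) hk1) (hp0 (k + 1) hk1)).2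
  have hQle : Q (k + 1) ≤ p (k + 1) := minPeriodOn_le (hper (k + 1) hk1) (hp0 (k + 1) hk1)
  have := hap (k + 1) hk1
  have := hp0 (k + 1) hk1
  rw [← hconst (k + 1) hk1]
  exact hQ k (by omega) (by omega)

theorem returnSet_nonempty [Finite A] (x : ℕ → A) (n : ℕ) : (returnSet x n).Nonempty := by
  obtain ⟨i, j, hij, hfactor⟩ :=
    Finite.exists_ne_map_eq_of_infinite fun i : ℕ => fun k : Fin n => x (i + k)
  wlog hlt : i < j generalizing i j
  · exact this j i hij.symm hfactor.symm (by omega)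
  exact ⟨j + n, i, by omega, fun k hk => by simpa using congrFun hfactor ⟨k, hk⟩⟩

theorem exists_periodic_window_of_minReturn_le [Finite A] {n : ℕ}
    (hn : minReturn x n ≤ 2 * n) :
    ∃ a p, 0 < p ∧ a + p ≤ n ∧ HasPeriodOn x p a (a + n + p) := by
  obtain ⟨i, hi, hrep⟩ : minReturn x n ∈ returnSet x n :=
    Nat.sInf_mem (returnSet_nonempty x n)
  set m := minReturn x n
  refine ⟨i, m - n - i, by omega, by omega, fun t hit htm => ?_⟩
  have := hrep (t - i) (by omega)
  rw [show i + (t - i) = t by omega, show m - n + (t - i) = t + (m - n - i) by omega] at this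
  exact this.symm

end Windows

theorem stmt5 {A : Type*} [Fintype A] (x : ℕ → A)
    (hx : ¬ UltimatelyPeriodic x) :
    ∀ N : ℕ, ∃ n : ℕ, N ≤ n ∧ 2 * n + 1 ≤ minReturn x n := by
  by_contra! ⟨N, hN⟩
  exact hx (ultimatelyPeriodic_of_periodic_windows fun n hn =>
    exists_periodic_window_of_minReturn_le (by have := hN n hn; omega))
end

section
/- Let b ≥ 2 be an integer and let x = x_1 x_2 ... be an infinite word over {0, 1, ..., b−1} which is not ultimately periodic. Then the irrationality exponent of ξ = Σ_{k≥1} x_k / b^k satisfies μ(ξ) ≥ rep(x)/(rep(x) − 1), where rep(x) = liminf r(n, x)/n (the right-hand side being interpreted as +∞ if rep(x) = 1). -/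
open Filter

/-- The irrationality exponent of `ξ`, as an extended real: the supremum of
all real `μ` such that `|ξ - p/q| < q^(-μ)` has infinitely many rational
solutions `p/q` with `q ≥ 1`. -/
noncomputable def irrationalityExponent (ξ : ℝ) : EReal :=
  sSup {e : EReal | ∃ μ : ℝ, e = (μ : EReal) ∧
    {pq : ℤ × ℕ | 1 ≤ pq.2 ∧ |ξ - pq.1 / pq.2| < (pq.2 : ℝ) ^ (-μ)}.Infinite}


/-!
Write `r(n) = i + T + n`, where the factor of length `n` at position `i` reappears at position
`i + T`. Then `b^(i+T) ξ` and `b^i ξ` differ by an integer plus the difference of two tails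
whose first `n` digits agree, so `q = b^(i+T) - b^i ≤ b^(r(n) - n)` satisfies
`|q ξ - p| ≤ b^(-n)` for some integer `p`. When `r(n) < (ρ + ε) n`, this gives
`|ξ - p/q| < q^(-μ)` for every `μ < ρ/(ρ - 1)` (every `μ` when `ρ = 1`), and such `n` are
arbitrarily large.
-/

section OfDigits

open Real

variable {b : ℕ}

lemma exists_pow_mul_sum_ofDigitsTerm_eq (a : ℕ → Fin b) (n : ℕ) :
    ∃ A : ℕ, (b : ℝ) ^ n * ∑ i ∈ Finset.range n, ofDigitsTerm a i = A := by
  have hb : (b : ℝ) ≠ 0 := by exact_mod_cast (Fin.pos (a 0)).ne'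
  induction n with
  | zero => exact ⟨0, by simp⟩
  | succ n ih =>
    obtain ⟨A, hA⟩ := ih
    refine ⟨b * A + a n, ?_⟩
    rw [Finset.sum_range_succ, mul_add, pow_succ', mul_assoc, hA, ofDigitsTerm, ← pow_succ',
      mul_left_comm, mul_inv_cancel₀ (pow_ne_zero _ hb)]
    push_cast
    ring

lemma exists_pow_mul_ofDigits_eq (a : ℕ → Fin b) (n : ℕ) :
    ∃ A : ℕ, (b : ℝ) ^ n * ofDigits a = A + ofDigits (fun i ↦ a (i + n)) := by
  have hb : (b : ℝ) ≠ 0 := by exact_mod_cast (Fin.pos (a 0)).ne'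
  obtain ⟨A, hA⟩ := exists_pow_mul_sum_ofDigitsTerm_eq a n
  refine ⟨A, ?_⟩
  rw [ofDigits_eq_sum_add_ofDigits a n, mul_add, hA, ← mul_assoc,
    mul_inv_cancel₀ (pow_ne_zero _ hb), one_mul]

lemma exists_abs_mul_ofDigits_sub_le (a : ℕ → Fin b) {i T n : ℕ}
    (h : ∀ k < n, a (i + k) = a (i + T + k)) :
    ∃ p : ℤ,
      |((b ^ (i + T) - b ^ i : ℕ) : ℝ) * ofDigits a - p| ≤ ((b : ℝ) ^ n)⁻¹ := by
  obtain ⟨A, hA⟩ := exists_pow_mul_ofDigits_eq a i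
  obtain ⟨A', hA'⟩ := exists_pow_mul_ofDigits_eq a (i + T)
  refine ⟨A' - A, ?_⟩
  rw [Nat.cast_sub (Nat.pow_le_pow_right (Fin.pos (a 0)) (Nat.le_add_right i T))]
  push_cast
  rw [sub_mul, hA', hA]
  convert abs_ofDigits_sub_ofDigits_le (x := fun k ↦ a (k + (i + T))) (y := fun k ↦ a (k + i))
    (n := n) fun k hk ↦ ?_ using 2
  · ring
  · rw [add_comm k, add_comm k]
    exact (h k hk).symm

end OfDigits

def rationalApproximations (ξ μ : ℝ) : Set (ℤ × ℕ) :=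
  {pq | 1 ≤ pq.2 ∧ |ξ - pq.1 / pq.2| < (pq.2 : ℝ) ^ (-μ)}

lemma coe_le_irrationalityExponent {ξ μ : ℝ} (h : (rationalApproximations ξ μ).Infinite) :
    (μ : EReal) ≤ irrationalityExponent ξ :=
  le_sSup ⟨μ, rfl, h⟩

lemma rationalApproximations_infinite {ξ μ : ℝ}
    (h : ∀ ε > 0, ∃ pq ∈ rationalApproximations ξ μ, |ξ - pq.1 / pq.2| < ε) :
    (rationalApproximations ξ μ).Infinite := by
  by_cases hrat : ∃ pq ∈ rationalApproximations ξ μ, ξ = pq.1 / pq.2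
  · obtain ⟨⟨p, q⟩, ⟨hq, -⟩, hξ⟩ := hrat
    -- pairs are not required to be coprime, so all `(k p, k q)` are exact approximations
    refine Set.infinite_of_injective_forall_mem
      (f := fun k : ℕ ↦ (((k + 1 : ℕ) : ℤ) * p, (k + 1) * q)) (fun k l hkl ↦ ?_)
      fun k ↦ ?_
    · have := Nat.eq_of_mul_eq_mul_right hq (congrArg Prod.snd hkl)
      omega
    · refine ⟨Nat.one_le_iff_ne_zero.2 (by positivity), ?_⟩
      simp only [hξ]
      push_cast
      rw [mul_div_mul_left _ _ (by positivity), sub_self, abs_zero]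
      exact Real.rpow_pos_of_pos (by positivity) _
  · push Not at hrat
    refine Set.Infinite.of_image (fun pq ↦ |ξ - pq.1 / pq.2|⁻¹)
      (Set.infinite_of_not_bddAbove ?_)
    rintro ⟨M, hM⟩
    have hM1 : 0 < max M 1 := lt_max_of_lt_right one_pos
    obtain ⟨pq, hpq, hlt⟩ := h (max M 1)⁻¹ (inv_pos.2 hM1)
    have hpos : 0 < |ξ - pq.1 / pq.2| := abs_pos.2 (sub_ne_zero.2 (hrat pq hpq))
    have hgt : max M 1 < |ξ - pq.1 / pq.2|⁻¹ := (lt_inv_comm₀ hpos hM1).1 hlt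
    linarith [hM ⟨pq, hpq, rfl⟩, le_max_left M 1]

lemma abs_sub_div_le_div {ξ δ : ℝ} {p : ℤ} {q : ℕ} (hq : 1 ≤ q)
    (h : |q * ξ - p| ≤ δ) :
    |ξ - p / q| ≤ δ / q := by
  have hq0 : (0 : ℝ) < q := by exact_mod_cast hq
  rw [show ξ - p / q = (q * ξ - p) / q by field_simp, abs_div, abs_of_pos hq0]
  exact div_le_div_of_nonneg_right h hq0.le

lemma abs_sub_div_lt_rpow_neg {ξ μ : ℝ} {p : ℤ} {b q m n : ℕ} (hb : 1 < b) (hq : 1 ≤ q)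
    (hqm : q ≤ b ^ m) (hmn : m * (μ - 1) < n) (hμ : 1 ≤ μ)
    (h : |q * ξ - p| ≤ ((b : ℝ) ^ n)⁻¹) :
    |ξ - p / q| < (q : ℝ) ^ (-μ) := by
  have hq0 : (0 : ℝ) < q := by exact_mod_cast hq
  have hpow : (q : ℝ) ^ (μ - 1) < (b : ℝ) ^ n := calc
    (q : ℝ) ^ (μ - 1) ≤ ((b : ℝ) ^ m) ^ (μ - 1) :=
      Real.rpow_le_rpow hq0.le (by exact_mod_cast hqm) (by linarith)
    _ = (b : ℝ) ^ (m * (μ - 1)) := (Real.rpow_natCast_mul (by positivity) m _).symm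
    _ < (b : ℝ) ^ (n : ℝ) := Real.rpow_lt_rpow_of_exponent_lt (by exact_mod_cast hb) hmn
    _ = (b : ℝ) ^ n := Real.rpow_natCast _ _
  calc |ξ - p / q| ≤ ((b : ℝ) ^ n)⁻¹ / q := abs_sub_div_le_div hq h
    _ < ((q : ℝ) ^ (μ - 1))⁻¹ / q := by gcongr
    _ = (q : ℝ) ^ (-μ) := by
      rw [← Real.rpow_neg hq0.le, ← Real.rpow_sub_one hq0.ne']
      ring_nf

lemma exists_eq_add_of_minReturn_pos {A : Type*} {x : ℕ → A} {n : ℕ} (h : 0 < minReturn x n) :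
    ∃ i T : ℕ, 0 < T ∧ minReturn x n = i + T + n ∧
      ∀ k < n, x (i + k) = x (i + T + k) := by
  have hmem : minReturn x n ∈ returnSet x n := Nat.sInf_mem (Nat.nonempty_of_pos_sInf h)
  obtain ⟨i, hin, hrep⟩ := hmem
  refine ⟨i, minReturn x n - n - i, by omega, by omega, fun k hk ↦ ?_⟩
  rw [show i + (minReturn x n - n - i) + k = minReturn x n - n + k by omega]
  exact hrep k hk

lemma frequently_minReturn_sub_mul_lt {A : Type*} {x : ℕ → A} {c μ : ℝ} (hc : 0 < c)
    (hlim : liminf (fun n : ℕ ↦ (((minReturn x n : ℝ) / n : ℝ) : EReal)) atTop =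
      (c : EReal))
    (hμ : 1 ≤ μ) (hcμ : (c - 1) * (μ - 1) < 1) :
    ∃ᶠ n in atTop, 0 < minReturn x n ∧ ((minReturn x n : ℝ) - n) * (μ - 1) < n := by
  set ε := (1 - (c - 1) * (μ - 1)) / μ
  have hεμ : ε * μ = 1 - (c - 1) * (μ - 1) := div_mul_cancel₀ _ (by positivity)
  have hε0 : 0 < ε := div_pos (by linarith) (by positivity)
  have hcε : (c + ε - 1) * (μ - 1) < 1 := by nlinarith
  have hfreq :
      ∃ᶠ n in atTop, (((minReturn x n : ℝ) / n : ℝ) : EReal) < ((c + ε : ℝ) : EReal) :=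
    frequently_lt_of_liminf_lt (by isBoundedDefault) (by rw [hlim]; exact_mod_cast (by linarith))
  have hev : ∀ᶠ n in atTop, ((0 : ℝ) : EReal) < (((minReturn x n : ℝ) / n : ℝ) : EReal) :=
    eventually_lt_of_lt_liminf (by rw [hlim]; exact_mod_cast hc) (by isBoundedDefault)
  refine (hfreq.and_eventually hev).mono fun n ⟨hlt, hpos⟩ ↦ ?_
  rw [EReal.coe_lt_coe_iff] at hlt hpos
  obtain ⟨hr, hn⟩ : (0 : ℝ) < minReturn x n ∧ (0 : ℝ) < n := by
    rcases div_pos_iff.1 hpos with h | ⟨-, h⟩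
    · exact h
    · exact absurd h (Nat.cast_nonneg n).not_gt
  refine ⟨by exact_mod_cast hr, ?_⟩
  rw [div_lt_iff₀ hn] at hlt
  have hrn : (minReturn x n : ℝ) - n ≤ (c + ε - 1) * n := by linarith
  nlinarith [mul_le_mul_of_nonneg_right hrn (by linarith : (0 : ℝ) ≤ μ - 1),
    mul_lt_mul_of_pos_right hcε hn]

section BaseExpansion

variable {b : ℕ} {x : ℕ → ℕ}

lemma tsum_div_pow_eq_ofDigits (hx : ∀ k, x k < b) :
    ∑' k : ℕ, (x k : ℝ) / b ^ (k + 1) = Real.ofDigits fun k ↦ (⟨x k, hx k⟩ : Fin b) :=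
  tsum_congr fun k ↦ by simp [Real.ofDigitsTerm, div_eq_mul_inv]

lemma rationalApproximations_tsum_infinite (hb : 1 < b) (hx : ∀ k, x k < b) {μ : ℝ}
    (hμ : 1 ≤ μ)
    (hfreq : ∃ᶠ n in atTop, 0 < minReturn x n ∧ ((minReturn x n : ℝ) - n) * (μ - 1) < n) :
    (rationalApproximations (∑' k : ℕ, (x k : ℝ) / b ^ (k + 1)) μ).Infinite := by
  have hb1 : (1 : ℝ) < b := by exact_mod_cast hb
  rw [tsum_div_pow_eq_ofDigits hx]
  refine rationalApproximations_infinite fun ε hε ↦ ?_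
  obtain ⟨N, hN⟩ := exists_pow_lt_of_lt_one hε (inv_lt_one_of_one_lt₀ hb1)
  obtain ⟨n, hnN, hr, hrn⟩ := frequently_atTop.1 hfreq N
  obtain ⟨i, T, hT, hr_eq, hrep⟩ := exists_eq_add_of_minReturn_pos hr
  obtain ⟨p, hp⟩ := exists_abs_mul_ofDigits_sub_le (fun k ↦ (⟨x k, hx k⟩ : Fin b))
    fun k hk ↦ Fin.ext (hrep k hk)
  have hq : 1 ≤ b ^ (i + T) - b ^ i := by
    have := Nat.pow_lt_pow_right hb (show i < i + T by omega)
    omega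
  have hiT : ((i + T : ℕ) : ℝ) * (μ - 1) < n := by
    rwa [hr_eq, show ((i + T + n : ℕ) : ℝ) - n = (i + T : ℕ) by push_cast; ring] at hrn
  refine ⟨(p, b ^ (i + T) - b ^ i),
    ⟨hq, abs_sub_div_lt_rpow_neg hb hq (Nat.sub_le _ _) hiT hμ hp⟩, ?_⟩
  calc _ ≤ ((b : ℝ) ^ n)⁻¹ / (b ^ (i + T) - b ^ i : ℕ) := abs_sub_div_le_div hq hp
    _ ≤ ((b : ℝ) ^ n)⁻¹ := div_le_self (by positivity) (by exact_mod_cast hq)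
    _ ≤ (b : ℝ)⁻¹ ^ N := by
      rw [← inv_pow]
      exact pow_le_pow_of_le_one (by positivity) (inv_le_one_of_one_le₀ hb1.le) hnN
    _ < ε := hN

lemma coe_le_irrationalityExponent_of_liminf (hb : 1 < b) (hx : ∀ k, x k < b) {c μ : ℝ}
    (hc : 0 < c)
    (hlim : liminf (fun n : ℕ ↦ (((minReturn x n : ℝ) / n : ℝ) : EReal)) atTop =
      (c : EReal))
    (hcμ : (c - 1) * (μ - 1) < 1) :
    (μ : EReal) ≤ irrationalityExponent (∑' k : ℕ, (x k : ℝ) / b ^ (k + 1)) := by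
  have hcμ' : (c - 1) * (max μ 1 - 1) < 1 := by
    rcases le_total μ 1 with h | h
    · simp [max_eq_right h]
    · rwa [max_eq_left h]
  have hμ' : 1 ≤ max μ 1 := le_max_right μ 1
  exact (EReal.coe_le_coe_iff.2 (le_max_left μ 1)).trans <| coe_le_irrationalityExponent <|
    rationalApproximations_tsum_infinite hb hx hμ'
      (frequently_minReturn_sub_mul_lt hc hlim hμ' hcμ')

end BaseExpansion

theorem stmt9_general {b : ℕ} (hb : 2 ≤ b) (x : ℕ → ℕ) (hx : ∀ k, x k < b) :
    (liminf (fun n : ℕ => (((minReturn x n : ℝ) / n : ℝ) : EReal)) atTop = 1 →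
        irrationalityExponent (∑' k : ℕ, (x k : ℝ) / b ^ (k + 1)) = ⊤) ∧
      ∀ ρ : ℝ, 1 < ρ →
        liminf (fun n : ℕ => (((minReturn x n : ℝ) / n : ℝ) : EReal)) atTop = (ρ : EReal) →
        ((ρ / (ρ - 1) : ℝ) : EReal) ≤
          irrationalityExponent (∑' k : ℕ, (x k : ℝ) / b ^ (k + 1)) := by
  refine ⟨fun hlim ↦ ?_, fun ρ hρ hlim ↦ ?_⟩
  · rw [← EReal.coe_one] at hlim
    refine (EReal.eq_top_iff_forall_lt _).2 fun μ ↦ ?_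
    exact (EReal.coe_lt_coe_iff.2 (lt_add_one μ)).trans_le
      (coe_le_irrationalityExponent_of_liminf hb hx one_pos hlim (by simp))
  · refine EReal.ge_of_forall_gt_iff_ge.1 fun μ hμ ↦ ?_
    have hρ1 : 0 < ρ - 1 := sub_pos.2 hρ
    have hμρ : μ * (ρ - 1) < ρ := (lt_div_iff₀ hρ1).1 (EReal.coe_lt_coe_iff.1 hμ)
    exact coe_le_irrationalityExponent_of_liminf hb hx (by linarith) hlim (by nlinarith)

theorem stmt9 {b : ℕ} (hb : 2 ≤ b) (x : ℕ → ℕ) (hx : ∀ k, x k < b)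
    (hnp : ¬ UltimatelyPeriodic x) :
    (liminf (fun n : ℕ => (((minReturn x n : ℝ) / n : ℝ) : EReal)) atTop = 1 →
        irrationalityExponent (∑' k : ℕ, (x k : ℝ) / b ^ (k + 1)) = ⊤) ∧
      ∀ ρ : ℝ, 1 < ρ →
        liminf (fun n : ℕ => (((minReturn x n : ℝ) / n : ℝ) : EReal)) atTop = (ρ : EReal) →
        ((ρ / (ρ - 1) : ℝ) : EReal) ≤
          irrationalityExponent (∑' k : ℕ, (x k : ℝ) / b ^ (k + 1)) :=
  stmt9_general hb x hx
end
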